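/- Fix q₀ ∈ U such that K(q₀) is invertible. Then the real directional derivative of the first component z¹ of z at q₀ along the first real coordinate direction e₁ ∈ ℂ^m (i.e. ∂z¹/∂x¹) vanishes if and only if the determinant of the m×m matrix obtained from K(q₀) by replacing its first column with the vector (1, M(z(q₀))_{1,2}, …, M(z(q₀))_{1,m})ᵀ is zero. -/

import Mathlib

/-!
Along the real line `t ↦ q₀ + t • v` one has `F (q₀ + t • v) ζ = F q₀ ζ + t • (v - M ζ *ᵥ star v)`,
so differentiating `F q (z q) = 0` at `t = 0` gives `K(q₀) *ᵥ ∂ᵥz = M(z q₀) *ᵥ star v - v`.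
For `v = e₁` antisymmetry of `M` turns the right-hand side into minus the replacement column,
and Cramer's rule gives `det K(q₀) · ∂z¹/∂x¹ = -det (K(q₀) with first column replaced)`.
-/

open Matrix Filter Topology

theorem hasDerivAt_smul_self {𝕜 F : Type*} [NontriviallyNormedField 𝕜] [NormedAddCommGroup F]
    [NormedSpace 𝕜 F] {g : 𝕜 → F} (hg : ContinuousAt g 0) :
    HasDerivAt (fun t => t • g t) (g 0) 0 := by
  rw [hasDerivAt_iff_tendsto_slope]
  refine (hg.tendsto.mono_left nhdsWithin_le_nhds).congr' ?_
  filter_upwards [self_mem_nhdsWithin] with t ht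
  rw [slope_def_module, zero_smul, sub_zero, sub_zero, smul_smul, inv_mul_cancel₀ ht, one_smul]

namespace Matrix

variable {n R : Type*} [Fintype n] [DecidableEq n]

theorem eq_zero_iff_det_updateCol_eq_zero [CommRing R] {A : Matrix n n R} (hA : IsUnit A.det)
    {x b : n → R} (hx : A *ᵥ x = b) (i : n) : x i = 0 ↔ (A.updateCol i b).det = 0 := by
  have : A.det • x = cramer A b := by
    rw [← hx, cramer_eq_adjugate_mulVec, mulVec_mulVec, adjugate_mul, smul_mulVec, one_mulVec]
  rw [← cramer_apply, ← this, Pi.smul_apply, smul_eq_mul, hA.mul_right_eq_zero]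

theorem mulVec_single_one_sub_of_transpose_eq_neg [Ring R] [IsAddTorsionFree R]
    {A : Matrix n n R} (hA : Aᵀ = -A) (i : n) :
    A *ᵥ Pi.single i 1 - Pi.single i 1 = -fun k => if k = i then 1 else A i k := by
  have hcol : ∀ k, A k i = -A i k := fun k => by
    rw [← neg_eq_iff_eq_neg, ← neg_apply, ← hA, transpose_apply]
  ext k
  by_cases hk : k = i
  · subst hk
    simp [self_eq_neg.1 (hcol k)]
  · simp [hk, hcol k]

end Matrix

section

variable {ι : Type*} [Fintype ι]

theorem sub_mulVec_star_add_smul (A : Matrix ι ι ℂ) (q v b : ι → ℂ) (t : ℝ) :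
    q + t • v - A *ᵥ star (q + t • v) - b = q - A *ᵥ star q - b + t • (v - A *ᵥ star v) := by
  rw [star_add, star_smul, star_trivial t, mulVec_add, mulVec_smul]
  module

theorem fderiv_apply_fderiv_eq_mulVec_star_sub {M : (ι → ℂ) → Matrix ι ι ℂ}
    {h z : (ι → ℂ) → ι → ℂ} {F : (ι → ℂ) → (ι → ℂ) → ι → ℂ}
    (hF : ∀ q ζ, F q ζ = q - M ζ *ᵥ star q - h ζ) {q₀ : ι → ℂ}
    (hFq₀ : DifferentiableAt ℂ (F q₀) (z q₀)) (hM : ∀ i j, ContinuousAt (fun ζ => M ζ i j) (z q₀))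
    (hz : DifferentiableAt ℝ z q₀) (hzF : ∀ᶠ q in 𝓝 q₀, F q (z q) = 0) (v : ι → ℂ) :
    fderiv ℂ (F q₀) (z q₀) (fderiv ℝ z q₀ v) = M (z q₀) *ᵥ star v - v := by
  set γ : ℝ → ι → ℂ := fun t => z (q₀ + t • v)
  have hline : HasDerivAt (fun t : ℝ => q₀ + t • v) v 0 := by
    simpa using ((hasDerivAt_id (0 : ℝ)).smul_const v).const_add q₀
  have hγ0 : γ 0 = z q₀ := by simp [γ]
  have hγ : HasDerivAt γ (fderiv ℝ z q₀ v) 0 :=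
    hz.hasFDerivAt.comp_hasDerivAt_of_eq 0 hline (by simp)
  have hFγ : HasDerivAt (fun t => F q₀ (γ t)) (fderiv ℂ (F q₀) (z q₀) (fderiv ℝ z q₀ v)) 0 :=
    (hFq₀.hasFDerivAt.restrictScalars ℝ).comp_hasDerivAt_of_eq 0 hγ hγ0.symm
  have hMγ : ContinuousAt (fun t => v - M (γ t) *ᵥ star v) 0 := by
    have : ∀ i j, ContinuousAt (fun t => M (γ t) i j) 0 := fun i j =>
      (hM i j).comp_of_eq hγ.continuousAt hγ0
    refine continuousAt_pi.2 fun i => continuousAt_const.sub ?_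
    simp only [mulVec, dotProduct]
    exact tendsto_finsetSum _ fun j _ => (this i j).mul continuousAt_const
  have hsum := hFγ.add (hasDerivAt_smul_self hMγ)
  have hzero : (fun t : ℝ => F q₀ (γ t) + t • (v - M (γ t) *ᵥ star v)) =ᶠ[𝓝 0] fun _ => 0 := by
    have : Tendsto (fun t : ℝ => q₀ + t • v) (𝓝 0) (𝓝 q₀) := by
      simpa using hline.continuousAt.tendsto
    filter_upwards [this.eventually hzF] with t ht
    rwa [hF, ← sub_mulVec_star_add_smul, ← hF]
  have hderiv := hsum.unique ((hasDerivAt_const (0 : ℝ) (0 : ι → ℂ)).congr_of_eventuallyEq hzero)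
  rw [hγ0] at hderiv
  linear_combination (norm := module) hderiv

end

theorem orthogonal_reduction_iff_det_vanishes
    /- Invariance of `z¹` along the first real coordinate direction `e₁`
       is equivalent to the vanishing of `det K(q₀)` with first column
       replaced by `(1, M(z(q₀))₁₂, …, M(z(q₀))₁ₘ)ᵀ`. -/
    (m : ℕ) (hm : 2 ≤ m)
    (V : Set (Fin m → ℂ)) (hV : IsOpen V)
    (M : (Fin m → ℂ) → Matrix (Fin m) (Fin m) ℂ)
    (hM : ∀ i j, DifferentiableOn ℂ (fun ζ => M ζ i j) V)
    (hManti : ∀ ζ ∈ V, (M ζ)ᵀ = -(M ζ))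
    (h : (Fin m → ℂ) → (Fin m → ℂ))
    (hh : ∀ i, DifferentiableOn ℂ (fun ζ => h ζ i) V)
    (F : (Fin m → ℂ) → (Fin m → ℂ) → (Fin m → ℂ))
    (hF : ∀ q ζ, F q ζ =
      fun i => q i - (∑ j, M ζ i j * (starRingEnd ℂ) (q j)) - h ζ i)
    (U : Set (Fin m → ℂ)) (hU : IsOpen U)
    (z : (Fin m → ℂ) → (Fin m → ℂ))
    (hzV : ∀ q ∈ U, z q ∈ V)
    (hzF : ∀ q ∈ U, F q (z q) = 0)
    (hzdiff : DifferentiableOn ℝ z U)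
    (K : (Fin m → ℂ) → Matrix (Fin m) (Fin m) ℂ)
    (hK : ∀ q ∈ U, ∀ i j, K q i j =
      fderiv ℂ (fun ζ => F q ζ i) (z q) (Pi.single j 1))
    (q₀ : Fin m → ℂ) (hq₀ : q₀ ∈ U)
    (hKinv : IsUnit (K q₀).det) :
    fderiv ℝ (fun q => z q (⟨0, by omega⟩ : Fin m)) q₀
        (Pi.single (⟨0, by omega⟩ : Fin m) 1) = 0 ↔
      (Matrix.updateCol (K q₀) (⟨0, by omega⟩ : Fin m)
        (fun i => if i = (⟨0, by omega⟩ : Fin m) then 1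
          else M (z q₀) (⟨0, by omega⟩ : Fin m) i)).det = 0 := by
  set i₀ : Fin m := ⟨0, by omega⟩
  have hV₀ : V ∈ 𝓝 (z q₀) := hV.mem_nhds (hzV q₀ hq₀)
  have hM₀ i j : DifferentiableAt ℂ (fun ζ => M ζ i j) (z q₀) := (hM i j).differentiableAt hV₀
  have hFq₀ : DifferentiableAt ℂ (F q₀) (z q₀) := by
    refine differentiableAt_pi.2 fun i => ?_
    simp only [hF]
    have := (hh i).differentiableAt hV₀
    fun_prop
  have hz : DifferentiableAt ℝ z q₀ := hzdiff.differentiableAt (hU.mem_nhds hq₀)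
  have hK₀ : K q₀ =
      LinearMap.toMatrix' (fderiv ℂ (F q₀) (z q₀) : (Fin m → ℂ) →ₗ[ℂ] Fin m → ℂ) := by
    ext i j
    rw [hK q₀ hq₀, fderiv_apply hFq₀, LinearMap.toMatrix'_apply]
    rfl
  -- `*ᵥ` and `star` unfold to the componentwise sum and conjugation of `hF`.
  have hF' : ∀ q ζ, F q ζ = q - M ζ *ᵥ star q - h ζ := hF
  have hlin := fderiv_apply_fderiv_eq_mulVec_star_sub hF' hFq₀
    (fun i j => (hM₀ i j).continuousAt) hz
    (eventually_of_mem (hU.mem_nhds hq₀) hzF) (Pi.single i₀ 1)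
  have hKw : K q₀ *ᵥ -fderiv ℝ z q₀ (Pi.single i₀ 1) =
      fun i => if i = i₀ then 1 else M (z q₀) i₀ i := by
    rw [mulVec_neg, hK₀, LinearMap.toMatrix'_mulVec, ContinuousLinearMap.coe_coe, hlin,
      ← Pi.single_star, star_one,
      mulVec_single_one_sub_of_transpose_eq_neg (hManti _ (hzV q₀ hq₀)), neg_neg]
  rw [fderiv_apply hz, ContinuousLinearMap.comp_apply, ContinuousLinearMap.proj_apply,
    ← neg_eq_zero, ← Pi.neg_apply]
  exact eq_zero_iff_det_updateCol_eq_zero hKinv hKw i₀
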